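/- arXiv:2510.04578 — 2 statements merged into one kernel-verified Lean document; each statement's English description precedes it below -/
import Mathlib

section
/- Assume the structure constants are nonnegative. Then for every z ∈ ℝ_+^n × ℝ_+^ν and every integer t_0 ≥ 0, one has W^{t_0}(z) ∈ O^{n,ν} if and only if ϖ(W^{t_0 + 1}(z)) = 0. In particular (t_0 = 0), ϖ(W(z)) = 0 if and only if z ∈ O^{n,ν}. -/
open Filter

/-- The gonosomic evolution operator `W` on `ℝ^n × ℝ^ν` associated with structure constants
`γ_{ipk}` and `γ̃_{ipr}`: it maps `((x_i), (y_p))` to `((x'_k), (y'_r))` with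
`x'_k = Σ_{i,p} γ_{ipk} x_i y_p` and `y'_r = Σ_{i,p} γ̃_{ipr} x_i y_p`. -/
noncomputable def W {n ν : ℕ} (γ : Fin n → Fin ν → Fin n → ℝ)
    (γ' : Fin n → Fin ν → Fin ν → ℝ)
    (z : (Fin n → ℝ) × (Fin ν → ℝ)) : (Fin n → ℝ) × (Fin ν → ℝ) :=
  (fun k => ∑ i, ∑ p, γ i p k * z.1 i * z.2 p,
   fun r => ∑ i, ∑ p, γ' i p r * z.1 i * z.2 p)

/-- The linear form `ϖ(z) = Σ_i x_i + Σ_p y_p` on `ℝ^n × ℝ^ν`. -/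
noncomputable def piW {n ν : ℕ} (z : (Fin n → ℝ) × (Fin ν → ℝ)) : ℝ :=
  ∑ i, z.1 i + ∑ p, z.2 p

/-- `γ_{ip} = Σ_k γ_{ipk}`. -/
noncomputable def gA {n ν : ℕ} (γ : Fin n → Fin ν → Fin n → ℝ)
    (i : Fin n) (p : Fin ν) : ℝ := ∑ k, γ i p k

/-- `γ̃_{ip} = Σ_r γ̃_{ipr}`. -/
noncomputable def gB {n ν : ℕ} (γ' : Fin n → Fin ν → Fin ν → ℝ)
    (i : Fin n) (p : Fin ν) : ℝ := ∑ r, γ' i p r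

/-- `σ_{ip} = γ_{ip} + γ̃_{ip}`. -/
noncomputable def σc {n ν : ℕ} (γ : Fin n → Fin ν → Fin n → ℝ)
    (γ' : Fin n → Fin ν → Fin ν → ℝ) (i : Fin n) (p : Fin ν) : ℝ :=
  gA γ i p + gB γ' i p

/-- The set `O^{n,ν}` of nonnegative points `((x_i),(y_p))` with `x_i y_p = 0` for every
pair `(i,p)` with `σ_{ip} ≠ 0`. -/
def Oset {n ν : ℕ} (γ : Fin n → Fin ν → Fin n → ℝ)
    (γ' : Fin n → Fin ν → Fin ν → ℝ) : Set ((Fin n → ℝ) × (Fin ν → ℝ)) :=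
  {z | (∀ i, 0 ≤ z.1 i) ∧ (∀ p, 0 ≤ z.2 p) ∧
    ∀ i p, σc γ γ' i p ≠ 0 → z.1 i * z.2 p = 0}

/-- The set `S^{n,ν} = S^{n+ν-1} \ O^{n,ν}`, where `S^{n+ν-1}` is the simplex of nonnegative
points with `ϖ(z) = 1`. -/
def Sset {n ν : ℕ} (γ : Fin n → Fin ν → Fin n → ℝ)
    (γ' : Fin n → Fin ν → Fin ν → ℝ) : Set ((Fin n → ℝ) × (Fin ν → ℝ)) :=
  {z | (∀ i, 0 ≤ z.1 i) ∧ (∀ p, 0 ≤ z.2 p) ∧ piW z = 1} \ Oset γ γ'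

/-- The normalized gonosomic operator `V(z) = (1/ϖ(W z)) • W z` (junk value when
`ϖ(W z) = 0`, since in `ℝ` we have `0⁻¹ = 0`). -/
noncomputable def V {n ν : ℕ} (γ : Fin n → Fin ν → Fin n → ℝ)
    (γ' : Fin n → Fin ν → Fin ν → ℝ)
    (z : (Fin n → ℝ) × (Fin ν → ℝ)) : (Fin n → ℝ) × (Fin ν → ℝ) :=
  (piW (W γ γ' z))⁻¹ • W γ γ' z

/- `ϖ(W z) = Σ_{i,p} σ_{ip} x_i y_p` is a sum of nonnegative terms when the structure constants
and `z` are nonnegative, so it vanishes exactly when `x_i y_p = 0` whenever `σ_{ip} ≠ 0`, i.e. when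
`z ∈ O^{n,ν}`. Since `W` preserves nonnegativity, this applies to every iterate `W^{t₀}(z)`. -/

lemma Fintype.sum_sum_mul_eq_zero_iff {R ι κ : Type*} [Semiring R] [PartialOrder R]
    [IsOrderedRing R] [NoZeroDivisors R] [Fintype ι] [Fintype κ] {c a : ι → κ → R}
    (hc : ∀ i p, 0 ≤ c i p) (ha : ∀ i p, 0 ≤ a i p) :
    ∑ i, ∑ p, c i p * a i p = 0 ↔ ∀ i p, c i p ≠ 0 → a i p = 0 := by
  have hterm : ∀ i p, 0 ≤ c i p * a i p := fun i p => mul_nonneg (hc i p) (ha i p)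
  simp only [Fintype.sum_eq_zero_iff_of_nonneg fun i => Finset.sum_nonneg fun p _ => hterm i p,
    funext_iff, Pi.zero_apply, Fintype.sum_eq_zero_iff_of_nonneg (hterm _), mul_eq_zero,
    or_iff_not_imp_left]

section Nonneg

variable {n ν : ℕ} {γ : Fin n → Fin ν → Fin n → ℝ} {γ' : Fin n → Fin ν → Fin ν → ℝ}

lemma piW_W (z : (Fin n → ℝ) × (Fin ν → ℝ)) :
    piW (W γ γ' z) = ∑ i, ∑ p, σc γ γ' i p * (z.1 i * z.2 p) := by
  simp only [piW, W, σc, gA, gB, add_mul, Finset.sum_mul, Finset.sum_add_distrib]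
  congr 1 <;>
  · rw [Finset.sum_comm]
    refine Finset.sum_congr rfl fun i _ => ?_
    rw [Finset.sum_comm]
    exact Finset.sum_congr rfl fun p _ => Finset.sum_congr rfl fun _ _ => by ring

variable (hγ : ∀ i p k, 0 ≤ γ i p k) (hγ' : ∀ i p r, 0 ≤ γ' i p r)
include hγ hγ'

lemma σc_nonneg (i : Fin n) (p : Fin ν) : 0 ≤ σc γ γ' i p :=
  add_nonneg (Finset.sum_nonneg fun k _ => hγ i p k) (Finset.sum_nonneg fun r _ => hγ' i p r)

lemma W_nonneg {z : (Fin n → ℝ) × (Fin ν → ℝ)} (hz : 0 ≤ z) : 0 ≤ W γ γ' z := by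
  refine ⟨fun k => ?_, fun r => ?_⟩ <;>
    dsimp only [W, Prod.fst_zero, Prod.snd_zero, Pi.zero_apply]
  · exact Finset.sum_nonneg fun i _ => Finset.sum_nonneg fun p _ =>
      mul_nonneg (mul_nonneg (hγ i p k) (hz.1 i)) (hz.2 p)
  · exact Finset.sum_nonneg fun i _ => Finset.sum_nonneg fun p _ =>
      mul_nonneg (mul_nonneg (hγ' i p r) (hz.1 i)) (hz.2 p)

lemma iterate_W_nonneg {z : (Fin n → ℝ) × (Fin ν → ℝ)} (hz : 0 ≤ z) (t : ℕ) :
    0 ≤ (W γ γ')^[t] z :=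
  Function.Iterate.rec (fun w => 0 ≤ w) hz (fun _ => W_nonneg hγ hγ') t

lemma piW_W_eq_zero_iff_mem_Oset {z : (Fin n → ℝ) × (Fin ν → ℝ)} (hz : 0 ≤ z) :
    piW (W γ γ' z) = 0 ↔ z ∈ Oset γ γ' := by
  rw [piW_W, Fintype.sum_sum_mul_eq_zero_iff (σc_nonneg hγ hγ')
    (fun i p => mul_nonneg (hz.1 i) (hz.2 p))]
  exact ⟨fun h => ⟨hz.1, hz.2, h⟩, fun h => h.2.2⟩

end Nonneg

theorem stmt_14_general {n ν : ℕ}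
    (γ : Fin n → Fin ν → Fin n → ℝ) (γ' : Fin n → Fin ν → Fin ν → ℝ)
    (hγ : ∀ i p k, 0 ≤ γ i p k) (hγ' : ∀ i p r, 0 ≤ γ' i p r)
    (z : (Fin n → ℝ) × (Fin ν → ℝ)) (hz1 : ∀ i, 0 ≤ z.1 i) (hz2 : ∀ p, 0 ≤ z.2 p) :
    (∀ t₀ : ℕ, (W γ γ')^[t₀] z ∈ Oset γ γ' ↔ piW ((W γ γ')^[t₀ + 1] z) = 0) ∧
    (piW (W γ γ' z) = 0 ↔ z ∈ Oset γ γ') := by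
  have hz : 0 ≤ z := ⟨hz1, hz2⟩
  refine ⟨fun t₀ => ?_, piW_W_eq_zero_iff_mem_Oset hγ hγ' hz⟩
  rw [Function.iterate_succ_apply']
  exact (piW_W_eq_zero_iff_mem_Oset hγ hγ' (iterate_W_nonneg hγ hγ' hz t₀)).symm

/-- Suppose the structure constants are nonnegative.  Then for every
nonnegative `z` and every `t₀ ≥ 0`, one has `W^{t₀}(z) ∈ O^{n,ν}` iff `ϖ(W^{t₀+1}(z)) = 0`.
In particular (`t₀ = 0`), `ϖ(W z) = 0` iff `z ∈ O^{n,ν}`. -/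
theorem stmt_14 {n ν : ℕ} (hn : 1 ≤ n) (hν : 1 ≤ ν)
    (γ : Fin n → Fin ν → Fin n → ℝ) (γ' : Fin n → Fin ν → Fin ν → ℝ)
    (hγ : ∀ i p k, 0 ≤ γ i p k) (hγ' : ∀ i p r, 0 ≤ γ' i p r)
    (z : (Fin n → ℝ) × (Fin ν → ℝ)) (hz1 : ∀ i, 0 ≤ z.1 i) (hz2 : ∀ p, 0 ≤ z.2 p) :
    (∀ t₀ : ℕ, (W γ γ')^[t₀] z ∈ Oset γ γ' ↔ piW ((W γ γ')^[t₀ + 1] z) = 0) ∧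
    (piW (W γ γ' z) = 0 ↔ z ∈ Oset γ γ') :=
  stmt_14_general γ γ' hγ hγ' z hz1 hz2
end

section
/- Assume the structure constants are nonnegative. Let z* ∈ ℝ_+^n × ℝ_+^ν with ϖ(z*) > 0 be a periodic point of W with least period p ≥ 1 (i.e. W^p(z*) = z* and W^m(z*) ≠ z* for all 1 ≤ m < p). Then all the iterates of the normalized operator V at the point (1/ϖ(z*)) · z* are well defined (ϖ(W^t(z*)) ≠ 0 for all t), and (1/ϖ(z*)) · z* is a periodic point of V with least period exactly p. -/
open Filter

section Aux

variable {n ν : ℕ} (γ : Fin n → Fin ν → Fin n → ℝ) (γ' : Fin n → Fin ν → Fin ν → ℝ)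

lemma W_smul (c : ℝ) (z : (Fin n → ℝ) × (Fin ν → ℝ)) :
    W γ γ' (c • z) = (c ^ 2) • W γ γ' z := by
  unfold W
  refine Prod.ext ?_ ?_ <;>
  · funext k
    simp only [Prod.smul_fst, Prod.smul_snd, Pi.smul_apply, smul_eq_mul, Finset.mul_sum]
    exact Finset.sum_congr rfl fun i _ => Finset.sum_congr rfl fun p _ => by ring

lemma W_zero : W γ γ' (0 : (Fin n → ℝ) × (Fin ν → ℝ)) = 0 := by
  unfold W
  refine Prod.ext ?_ ?_ <;>
  · funext k
    simp

lemma W_iterate_smul (c : ℝ) (z : (Fin n → ℝ) × (Fin ν → ℝ)) (t : ℕ) :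
    (W γ γ')^[t] (c • z) = (c ^ (2 ^ t)) • (W γ γ')^[t] z := by
  induction t with
  | zero => simp
  | succ t ih =>
    rw [Function.iterate_succ_apply', Function.iterate_succ_apply', ih, W_smul]
    rw [← pow_mul, pow_succ]

lemma piW_smul (c : ℝ) (z : (Fin n → ℝ) × (Fin ν → ℝ)) :
    piW (c • z) = c * piW z := by
  simp [piW, Finset.mul_sum, mul_add]

lemma W_nonneg_s19 (hγ : ∀ i p k, 0 ≤ γ i p k) (hγ' : ∀ i p r, 0 ≤ γ' i p r)
    (z : (Fin n → ℝ) × (Fin ν → ℝ)) (h1 : ∀ i, 0 ≤ z.1 i) (h2 : ∀ p, 0 ≤ z.2 p) :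
    (∀ k, 0 ≤ (W γ γ' z).1 k) ∧ ∀ r, 0 ≤ (W γ γ' z).2 r := by
  unfold W
  constructor <;> intro k <;> simp only [] <;>
  · refine Finset.sum_nonneg fun i _ => Finset.sum_nonneg fun p _ => ?_
    have := h1 i; have := h2 p
    first
    | exact mul_nonneg (mul_nonneg (hγ i p k) ‹_›) ‹_›
    | exact mul_nonneg (mul_nonneg (hγ' i p k) ‹_›) ‹_›

lemma piW_zero_eq (z : (Fin n → ℝ) × (Fin ν → ℝ)) (h1 : ∀ i, 0 ≤ z.1 i)
    (h2 : ∀ p, 0 ≤ z.2 p) (h : piW z = 0) : z = 0 := by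
  have hs1 : ∑ i, z.1 i = 0 ∧ ∑ p, z.2 p = 0 := by
    constructor <;>
    · have a1 : (0:ℝ) ≤ ∑ i, z.1 i := Finset.sum_nonneg fun i _ => h1 i
      have a2 : (0:ℝ) ≤ ∑ p, z.2 p := Finset.sum_nonneg fun p _ => h2 p
      unfold piW at h; linarith
  refine Prod.ext ?_ ?_ <;> funext k
  · exact (Finset.sum_eq_zero_iff_of_nonneg (fun i _ => h1 i)).1 hs1.1 k (Finset.mem_univ k)
  · exact (Finset.sum_eq_zero_iff_of_nonneg (fun p _ => h2 p)).1 hs1.2 k (Finset.mem_univ k)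

lemma piW_nonneg (z : (Fin n → ℝ) × (Fin ν → ℝ)) (h1 : ∀ i, 0 ≤ z.1 i)
    (h2 : ∀ p, 0 ≤ z.2 p) : 0 ≤ piW z :=
  add_nonneg (Finset.sum_nonneg fun i _ => h1 i) (Finset.sum_nonneg fun p _ => h2 p)

end Aux

/-- Suppose the structure constants are nonnegative.  Let `z*` be a
nonnegative point with `ϖ(z*) > 0` which is periodic for `W` with least period `p ≥ 1`.
Then all iterates of `V` at `(1/ϖ(z*)) • z*` are well defined (`ϖ(W^t z*) ≠ 0` for all `t`),
and `(1/ϖ(z*)) • z*` is a periodic point of `V` with least period exactly `p`. -/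
theorem stmt_19 {n ν : ℕ} (hn : 1 ≤ n) (hν : 1 ≤ ν)
    (γ : Fin n → Fin ν → Fin n → ℝ) (γ' : Fin n → Fin ν → Fin ν → ℝ)
    (hγ : ∀ i p k, 0 ≤ γ i p k) (hγ' : ∀ i p r, 0 ≤ γ' i p r)
    (zs : (Fin n → ℝ) × (Fin ν → ℝ)) (hz1 : ∀ i, 0 ≤ zs.1 i) (hz2 : ∀ p, 0 ≤ zs.2 p)
    (hπ : 0 < piW zs)
    (p : ℕ) (hp : 1 ≤ p)
    (hper : (W γ γ')^[p] zs = zs)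
    (hleast : ∀ m : ℕ, 1 ≤ m → m < p → (W γ γ')^[m] zs ≠ zs) :
    (∀ t : ℕ, piW ((W γ γ')^[t] zs) ≠ 0) ∧
    (V γ γ')^[p] ((piW zs)⁻¹ • zs) = (piW zs)⁻¹ • zs ∧
    (∀ m : ℕ, 1 ≤ m → m < p →
      (V γ γ')^[m] ((piW zs)⁻¹ • zs) ≠ (piW zs)⁻¹ • zs) := by
  -- nonnegativity of all iterates
  have key1 : ∀ t : ℕ, (∀ i, 0 ≤ ((W γ γ')^[t] zs).1 i) ∧ ∀ p, 0 ≤ ((W γ γ')^[t] zs).2 p := by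
    intro t
    induction t with
    | zero => exact ⟨hz1, hz2⟩
    | succ t ih =>
      rw [Function.iterate_succ_apply']
      exact W_nonneg_s19 γ γ' hγ hγ' _ ih.1 ih.2
  -- periodicity at multiples of p
  have key_per : ∀ k : ℕ, (W γ γ')^[k * p] zs = zs := by
    intro k
    induction k with
    | zero => simp
    | succ k ih =>
      rw [Nat.succ_mul, Function.iterate_add_apply, hper, ih]
  -- all iterates have nonzero piW
  have key2 : ∀ t : ℕ, piW ((W γ γ')^[t] zs) ≠ 0 := by
    intro t h
    have hz0 : (W γ γ')^[t] zs = 0 := piW_zero_eq _ (key1 t).1 (key1 t).2 h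
    rcases Nat.eq_zero_or_pos t with ht | ht
    · subst ht
      simp only [Function.iterate_zero_apply] at hz0
      rw [hz0] at hπ
      simp [piW] at hπ
    · have hle : t ≤ t * p := Nat.le_mul_of_pos_right t hp
      have h1 : (W γ γ')^[t * p] zs = 0 := by
        have : (W γ γ')^[t * p - t + t] zs = (W γ γ')^[t * p - t] ((W γ γ')^[t] zs) :=
          Function.iterate_add_apply _ _ _ _
        rw [Nat.sub_add_cancel hle] at this
        rw [this, hz0]
        exact Function.iterate_fixed (W_zero γ γ') _
      rw [key_per t] at h1
      rw [h1] at hπ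
      simp [piW] at hπ
  -- piW of iterates is positive
  have key2' : ∀ t : ℕ, 0 < piW ((W γ γ')^[t] zs) := fun t =>
    lt_of_le_of_ne (piW_nonneg _ (key1 t).1 (key1 t).2) (Ne.symm (key2 t))
  -- the normalization formula for iterates of V
  have key3 : ∀ t : ℕ, (V γ γ')^[t] ((piW zs)⁻¹ • zs)
      = (piW ((W γ γ')^[t] zs))⁻¹ • (W γ γ')^[t] zs := by
    intro t
    induction t with
    | zero => simp
    | succ t ih =>
      rw [Function.iterate_succ_apply', ih]
      set w := (W γ γ')^[t] zs with hw
      have hc : piW w ≠ 0 := key2 t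
      have hW : W γ γ' ((piW w)⁻¹ • w) = ((piW w)⁻¹ ^ 2) • W γ γ' w := W_smul γ γ' _ _
      unfold V
      rw [hW, piW_smul, Function.iterate_succ_apply', ← hw]
      rw [smul_smul, mul_inv]
      congr 1
      have h2 : ((piW w)⁻¹ ^ 2 : ℝ) ≠ 0 := by positivity
      field_simp
  refine ⟨key2, ?_, ?_⟩
  · rw [key3 p, hper]
  · intro m hm1 hm2 heq
    rw [key3 m] at heq
    set w := (W γ γ')^[m] zs with hw
    have hcw : 0 < piW w := key2' m
    set c : ℝ := piW w * (piW zs)⁻¹ with hc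
    have hcpos : 0 < c := mul_pos hcw (inv_pos.2 hπ)
    have hwc : w = c • zs := by
      have := congrArg (fun u => (piW w) • u) heq
      simpa [smul_smul, mul_inv_cancel₀ (ne_of_gt hcw), hc] using this
    -- W^[m+p] zs two ways
    have hA : (W γ γ')^[m + p] zs = c • zs := by
      rw [Function.iterate_add_apply, hper, ← hw, hwc]
    have hB : (W γ γ')^[p + m] zs = (c ^ (2 ^ p)) • zs := by
      rw [Function.iterate_add_apply, ← hw, hwc, W_iterate_smul, hper]
    rw [Nat.add_comm p m, hA] at hB
    -- apply piW
    have hpi : c * piW zs = c ^ (2 ^ p) * piW zs := by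
      have := congrArg piW hB
      rwa [piW_smul, piW_smul] at this
    have hcc : c = c ^ (2 ^ p) := by
      have := mul_right_cancel₀ (ne_of_gt hπ) hpi
      exact this
    have h2p : 1 < 2 ^ p := Nat.one_lt_two_pow (by omega)
    have hc1 : c = 1 := by
      rcases lt_trichotomy c 1 with h | h | h
      · exfalso
        have : c ^ (2 ^ p) < c ^ 1 := pow_lt_pow_right_of_lt_one₀ hcpos h h2p
        rw [pow_one, ← hcc] at this
        exact lt_irrefl _ this
      · exact h
      · exfalso
        have : c ^ 1 < c ^ (2 ^ p) := pow_lt_pow_right₀ h h2p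
        rw [pow_one, ← hcc] at this
        exact lt_irrefl _ this
    rw [hc1, one_smul] at hwc
    exact hleast m hm1 hm2 (hw ▸ hwc)
end
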